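/- Let (M, s) be an oriented even Lagrangian matroid and F a basis of M. Then the index of M relative to F equals exactly half of the maximal height of bases of M relative to F. -/

import Mathlib

open Finset Matrix
open scoped Classical

/-- The index set `J = I ∪ I*`: the element `(i, false)` represents the unstarred
index `i+1`, and `(i, true)` represents the starred index `(i+1)*`. -/
abbrev JJ (n : ℕ) := Fin n × Bool

/-- The involution `* : J → J`. -/
def starJ {n : ℕ} (x : JJ n) : JJ n := (x.1, !x.2)

/-- A subset `A ⊆ J` is admissible iff `A ∩ A* = ∅`. -/
def AdmissibleSet {n : ℕ} (A : Finset (JJ n)) : Prop := ∀ x ∈ A, starJ x ∉ A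

/-- An admissible permutation of `J`: one commuting with `*`.  These form the
hyperoctahedral group `W = BC_n`. -/
def AdmissiblePerm {n : ℕ} (w : Equiv.Perm (JJ n)) : Prop := ∀ x, w (starJ x) = starJ (w x)

/-- The standard ordering `n* < … < 1* < 1 < … < n` on `J`, encoded by a value in `ℤ`. -/
def ordJ {n : ℕ} (x : JJ n) : ℤ := if x.2 then -((x.1 : ℤ) + 1) else (x.1 : ℤ) + 1

/-- The ordering `≤^w` on `J`: `x ≤^w y` iff `w⁻¹ x ≤ w⁻¹ y` in the standard order. -/
def leW {n : ℕ} (w : Equiv.Perm (JJ n)) (x y : JJ n) : Prop :=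
  ordJ (w.symm x) ≤ ordJ (w.symm y)

/-- The (Gale) ordering induced by `≤^w` on admissible subsets: `A ≼^w B` iff the
sorted lists dominate componentwise, equivalently iff there is a bijection
`f : A → B` with `a ≤^w f a` for all `a ∈ A`. -/
def setLE {n : ℕ} (w : Equiv.Perm (JJ n)) (A B : Finset (JJ n)) : Prop :=
  ∃ f : JJ n → JJ n, Set.BijOn f ↑A ↑B ∧ ∀ a ∈ A, leW w a (f a)

/-- `ℬ` is the collection of bases of a symplectic matroid of rank `k`: all members
are admissible `k`-sets, and for every admissible permutation `w` there is a
(necessarily unique) `≤^w`-maximal member (the Maximality Property). -/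
def IsSymplecticMatroid {n : ℕ} (k : ℕ) (ℬ : Finset (Finset (JJ n))) : Prop :=
  (∀ A ∈ ℬ, AdmissibleSet A ∧ A.card = k) ∧
  ∀ w : Equiv.Perm (JJ n), AdmissiblePerm w → ∃ A ∈ ℬ, ∀ B ∈ ℬ, setLE w B A

/-- A Lagrangian matroid is a symplectic matroid of rank `n`. -/
def IsLagrangianMatroid {n : ℕ} (ℬ : Finset (Finset (JJ n))) : Prop :=
  IsSymplecticMatroid n ℬ
/-- The vector `e_j ∈ ℝ^n` for `j ∈ J`: `e_i` for unstarred `i`, `-e_i` for starred. -/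
def eVec {n : ℕ} (x : JJ n) : Fin n → ℝ :=
  fun i => if i = x.1 then (if x.2 then -1 else 1) else 0

/-- The point `e_A = Σ_{j ∈ A} e_j ∈ ℝ^n` associated to an admissible set `A`. -/
def eSet {n : ℕ} (A : Finset (JJ n)) : Fin n → ℝ := ∑ x ∈ A, eVec x

/-- The matroid polytope: the convex hull of the points `e_A`, `A ∈ ℬ`. -/
def matroidPolytope {n : ℕ} (ℬ : Finset (Finset (JJ n))) : Set (Fin n → ℝ) :=
  convexHull ℝ (eSet '' ↑ℬ)

/-- Bases `A` and `B` are joined by an edge of the matroid polytope: there is a linear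
functional taking equal maximal values at `e_A`, `e_B` and strictly smaller values at
all other vertices. -/
def IsEdge {n : ℕ} (ℬ : Finset (Finset (JJ n))) (A B : Finset (JJ n)) : Prop :=
  A ∈ ℬ ∧ B ∈ ℬ ∧ A ≠ B ∧
  ∃ L : (Fin n → ℝ) →ₗ[ℝ] ℝ, L (eSet A) = L (eSet B) ∧
    ∀ C ∈ ℬ, C ≠ A → C ≠ B → L (eSet C) < L (eSet A)

/-- The height of `A` relative to the fundamental basis `F`: `h(A) = n - |A ∩ F|`. -/
def heightF {n : ℕ} (F A : Finset (JJ n)) : ℕ := n - (A ∩ F).card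

/-- A short edge: an edge whose ends are related by a short exchange `A = B ∆ {i,i*}`. -/
def IsShortEdge {n : ℕ} (ℬ : Finset (Finset (JJ n))) (A B : Finset (JJ n)) : Prop :=
  IsEdge ℬ A B ∧ ∃ i : JJ n, symmDiff A B = ({i, starJ i} : Finset (JJ n))

/-- A long edge: an edge whose ends are related by a long exchange
`A = B ∆ {i,i*,j,j*}`, `i ∉ {j,j*}`. -/
def IsLongEdge {n : ℕ} (ℬ : Finset (Finset (JJ n))) (A B : Finset (JJ n)) : Prop :=
  IsEdge ℬ A B ∧ ∃ i j : JJ n, i ≠ j ∧ i ≠ starJ j ∧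
    symmDiff A B = ({i, starJ i, j, starJ j} : Finset (JJ n))

/-- The four bases of a 2-dimensional face of the matroid polytope which is a square
with short edges (type sSquare): `A`, `A ∆ {i,i*}`, `A ∆ {j,j*}`, `A ∆ {i,i*,j,j*}`,
all of them bases. -/
def ShortSquare {n : ℕ} (ℬ : Finset (Finset (JJ n))) (v : Fin 4 → Finset (JJ n)) : Prop :=
  ∃ (A : Finset (JJ n)) (i j : JJ n), i.1 ≠ j.1 ∧
    v 0 = A ∧ v 1 = symmDiff A ({i, starJ i} : Finset (JJ n)) ∧
    v 2 = symmDiff A ({j, starJ j} : Finset (JJ n)) ∧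
    v 3 = symmDiff A ({i, starJ i, j, starJ j} : Finset (JJ n)) ∧
    ∀ k : Fin 4, v k ∈ ℬ

/-- `sF` is an orientation of the Lagrangian matroid with bases `ℬ` relative to the
fundamental basis `F`: it takes values `±1` on bases and satisfies axioms (i)–(iv). -/
def IsOrientationRel {n : ℕ} (ℬ : Finset (Finset (JJ n))) (F : Finset (JJ n))
    (sF : Finset (JJ n) → ℤ) : Prop :=
  (∀ A ∈ ℬ, sF A = 1 ∨ sF A = -1) ∧
  (∀ A B : Finset (JJ n), IsLongEdge ℬ A B → heightF F A = heightF F B → sF A = sF B) ∧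
  (∀ A B : Finset (JJ n), IsLongEdge ℬ A B → heightF F A ≠ heightF F B → sF A = -sF B) ∧
  (∀ v : Fin 4 → Finset (JJ n), ShortSquare ℬ v →
    ∀ k : Fin 4,
      ((∀ l m : Fin 4, l ≠ k → m ≠ k → sF (v l) = sF (v m)) ∧
        ∃ l : Fin 4, l ≠ k ∧ sF (v l) ≠ sF (v k)) →
      (∀ l : Fin 4, heightF F (v l) ≤ heightF F (v k)) ∨
      (∀ l : Fin 4, heightF F (v k) ≤ heightF F (v l))) ∧
  sF F = 1

/-- `(ℬ, s)` is an oriented Lagrangian matroid: `s` vanishes when an argument is not a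
basis, each `s G` is an orientation relative to `G`, and the change-of-fundamental-basis
rule holds. -/
def IsOrientation {n : ℕ} (ℬ : Finset (Finset (JJ n)))
    (s : Finset (JJ n) → Finset (JJ n) → ℤ) : Prop :=
  (∀ G A : Finset (JJ n), G ∉ ℬ ∨ A ∉ ℬ → s G A = 0) ∧
  (∀ G ∈ ℬ, IsOrientationRel ℬ G (s G)) ∧
  (∀ G ∈ ℬ, ∀ H ∈ ℬ, ∀ A ∈ ℬ, s G A = s H A * s H G * (-1) ^ ((G \ (H ∪ A)).card))
/-- An increasing path of length `p` in the matroid polytope starting at the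
fundamental basis `F`: consecutive vertices are joined by edges and strictly increase
for some linear functional compatible with the height relative to `F`. -/
def IncreasingPath {n : ℕ} (ℬ : Finset (Finset (JJ n))) (F : Finset (JJ n))
    (v : ℕ → Finset (JJ n)) (p : ℕ) : Prop :=
  v 0 = F ∧ (∀ i < p, IsEdge ℬ (v i) (v (i + 1))) ∧
  ∃ L : (Fin n → ℝ) →ₗ[ℝ] ℝ,
    (∀ A ∈ ℬ, ∀ B ∈ ℬ, heightF F B < heightF F A → L (eSet B) < L (eSet A)) ∧
    ∀ i < p, L (eSet (v i)) < L (eSet (v (i + 1)))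

/-- A height-increasing path: consecutive vertices are adjacent in the polytope and
the height relative to `F` strictly increases. -/
def HeightIncreasingPath {n : ℕ} (ℬ : Finset (Finset (JJ n))) (F : Finset (JJ n))
    (v : ℕ → Finset (JJ n)) (p : ℕ) : Prop :=
  v 0 = F ∧ ∀ i < p, IsEdge ℬ (v i) (v (i + 1)) ∧ heightF F (v i) < heightF F (v (i + 1))

/-- `A` is a basis of maximal height relative to `F`. -/
def MaxHeightBasis {n : ℕ} (ℬ : Finset (Finset (JJ n))) (F A : Finset (JJ n)) : Prop :=
  A ∈ ℬ ∧ ∀ B ∈ ℬ, heightF F B ≤ heightF F A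

/-- The number of changes of sign of `sF` along the path `v 0, v 1, …, v p`. -/
def signChanges {n : ℕ} (sF : Finset (JJ n) → ℤ) (v : ℕ → Finset (JJ n)) (p : ℕ) : ℕ :=
  ((Finset.range p).filter fun i => sF (v i) ≠ sF (v (i + 1))).card

/-- A 2-dimensional (exposed) face of the matroid polytope. -/
def Is2Face {n : ℕ} (ℬ : Finset (Finset (JJ n))) (Fc : Set (Fin n → ℝ)) : Prop :=
  IsExposed ℝ (matroidPolytope ℬ) Fc ∧ Module.finrank ℝ (vectorSpan ℝ Fc) = 2

/-- `v 0, …, v (m-1)` is the cycle of vertices (bases) of the 2-dimensional face `Fc`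
of the matroid polytope, consecutive ones (cyclically) being joined by edges. -/
def FaceCycle {n : ℕ} (ℬ : Finset (Finset (JJ n))) (Fc : Set (Fin n → ℝ)) (m : ℕ)
    (v : ℕ → Finset (JJ n)) : Prop :=
  Is2Face ℬ Fc ∧ 3 ≤ m ∧ (∀ i < m, v i ∈ ℬ ∧ eSet (v i) ∈ Fc) ∧
  (∀ A ∈ ℬ, eSet A ∈ Fc → ∃! i : ℕ, i < m ∧ v i = A) ∧
  ∀ i < m, IsEdge ℬ (v i) (v ((i + 1) % m))

/-- An orientation of the Lagrangian matroid polytope: an assignment `ε` of directions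
to short edges (`ε A B = 1` when the edge is directed from `A` to `B`; `ε` vanishes on
non-(short edges)) such that in every 2-dimensional face the number of short edges
directed clockwise equals the number directed anti-clockwise. -/
def IsPolytopeOrientation {n : ℕ} (ℬ : Finset (Finset (JJ n)))
    (ε : Finset (JJ n) → Finset (JJ n) → ℤ) : Prop :=
  (∀ A B : Finset (JJ n), IsShortEdge ℬ A B → (ε A B = 1 ∨ ε A B = -1) ∧ ε B A = -ε A B) ∧
  (∀ A B : Finset (JJ n), ¬IsShortEdge ℬ A B → ε A B = 0) ∧
  ∀ (Fc : Set (Fin n → ℝ)) (m : ℕ) (v : ℕ → Finset (JJ n)), FaceCycle ℬ Fc m v →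
    (∑ i ∈ Finset.range m, ε (v i) (v ((i + 1) % m))) = 0

/-- An inducing edge relative to `F`, for the polytope orientation `ε`: a vertical long
edge, or a short edge directed downwards (from the higher basis to the lower one). -/
def IsInducingEdge {n : ℕ} (ℬ : Finset (Finset (JJ n)))
    (ε : Finset (JJ n) → Finset (JJ n) → ℤ) (F A B : Finset (JJ n)) : Prop :=
  (IsLongEdge ℬ A B ∧ heightF F A ≠ heightF F B) ∨
  (IsShortEdge ℬ A B ∧
    ((heightF F B < heightF F A ∧ ε A B = 1) ∨ (heightF F A < heightF F B ∧ ε B A = 1)))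

/-- The signs `s` are induced from the polytope orientation `ε`: for every fundamental
basis `F`, `s F F = 1`, bases joined by an inducing edge get opposite signs, and bases
joined by a non-inducing edge get the same sign. -/
def InducedBy {n : ℕ} (ℬ : Finset (Finset (JJ n)))
    (ε : Finset (JJ n) → Finset (JJ n) → ℤ)
    (s : Finset (JJ n) → Finset (JJ n) → ℤ) : Prop :=
  ∀ F ∈ ℬ, s F F = 1 ∧ ∀ A B : Finset (JJ n), IsEdge ℬ A B →
    (IsInducingEdge ℬ ε F A B → s F A = -s F B) ∧
    (¬IsInducingEdge ℬ ε F A B → s F A = s F B)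

section Aux
variable {n : ℕ}

lemma starJ_starJ (x : JJ n) : starJ (starJ x) = x := by
  simp [starJ]

lemma ordJ_starJ (x : JJ n) : ordJ (starJ x) = -ordJ x := by
  obtain ⟨i, b⟩ := x; cases b <;> simp [starJ, ordJ]

lemma ordJ_injective : Function.Injective (ordJ (n := n)) := by
  rintro ⟨i, b⟩ ⟨j, c⟩ h
  cases b <;> cases c <;> simp only [ordJ, ite_true, ite_false, Bool.false_eq_true] at h <;>
    first
    | (exfalso; omega)
    | (have : i = j := by apply Fin.ext; omega
       simp [this])

lemma eVec_starJ (x : JJ n) : eVec (starJ x) = -eVec x := by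
  obtain ⟨i, b⟩ := x; cases b <;> (funext k; by_cases h : k = i <;> simp [starJ, eVec, h])

lemma eVec_injective : Function.Injective (eVec (n := n)) := by
  rintro ⟨i, b⟩ ⟨j, c⟩ h
  have h1 := congrFun h i
  have h2 := congrFun h j
  by_cases hij : i = j
  · subst hij
    cases b <;> cases c <;> simp [eVec] at h1 ⊢ <;> linarith
  · cases b <;> cases c <;> simp [eVec, hij, Ne.symm hij] at h1 h2 <;> tauto

/-- Transversal: contains exactly one of `(i, false)`, `(i, true)` for each `i`. -/
def Transversal (A : Finset (JJ n)) : Prop := ∀ i : Fin n, ∃! b : Bool, (i, b) ∈ A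

lemma transversal_of_admissible {A : Finset (JJ n)} (hA : AdmissibleSet A)
    (hc : A.card = n) : Transversal A := by
  have hinj : Set.InjOn Prod.fst (↑A : Set (JJ n)) := by
    intro x hx y hy hxy
    by_contra hne
    have hyx : y = starJ x := by
      obtain ⟨i, b⟩ := x; obtain ⟨j, c⟩ := y
      simp only at hxy; subst hxy
      have : b ≠ c := fun h => hne (by rw [h])
      cases b <;> cases c <;> simp_all [starJ]
    exact hA x hx (hyx ▸ hy)
  have himg : (A.image Prod.fst) = Finset.univ := by
    apply Finset.eq_univ_of_card
    rw [Finset.card_image_of_injOn hinj, hc, Fintype.card_fin]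
  intro i
  have : i ∈ A.image Prod.fst := himg ▸ Finset.mem_univ i
  obtain ⟨x, hx, hxi⟩ := Finset.mem_image.1 this
  refine ⟨x.2, by simpa [← hxi] using hx, ?_⟩
  intro b hb
  by_contra hne
  have : (i, b) = starJ x := by
    obtain ⟨j, c⟩ := x
    simp only at hxi; subst hxi
    have : b ≠ c := fun h => hne (by simp [h])
    cases b <;> cases c <;> simp_all [starJ]
  exact hA x hx (this ▸ hb)

lemma transversal_mem_iff {A : Finset (JJ n)} (hT : Transversal A) (i : Fin n) :
    ((i, false) ∈ A ↔ (i, true) ∉ A) := by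
  obtain ⟨b, hb, hu⟩ := hT i
  cases b
  · simp only [hb, true_iff]
    intro h; exact absurd (hu true h) (by simp)
  · constructor
    · intro h; exact absurd (hu false h) (by simp)
    · intro h; exact absurd hb h
lemma mem_iff_bool {A : Finset (JJ n)} (hT : Transversal A) (i : Fin n) (b : Bool) :
    ((i, b) ∈ A ↔ ((i, false) ∈ A ↔ b = false)) := by
  cases b
  · simp
  · simp only [transversal_mem_iff hT i]
    constructor
    · intro h; simp [h]
    · intro h; by_contra hn; simp [hn] at h

lemma eSet_apply {A : Finset (JJ n)} (hT : Transversal A) (i : Fin n) :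
    eSet A i = if (i, false) ∈ A then 1 else -1 := by
  obtain ⟨b, hb, hu⟩ := hT i
  have hsum : eSet A i = ∑ x ∈ A, eVec x i := by
    simp [eSet, Finset.sum_apply]
  rw [hsum, Finset.sum_eq_single_of_mem (i, b) hb]
  · have hmem : ((i, false) ∈ A ↔ b = false) := by
      constructor
      · intro h; exact (hu false h).symm
      · intro h; exact h ▸ hb
    cases b
    · simp only [eVec, if_pos rfl]
      rw [if_pos (hmem.2 rfl)]; simp
    · simp only [eVec, if_pos rfl]
      have hne : (i, false) ∉ A := fun h => by simpa using hmem.1 h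
      rw [if_neg hne]; norm_num
  · intro x hx hne
    have : x.1 ≠ i := by
      intro h
      exact hne (by rw [← h] at hu ⊢; exact Prod.ext rfl (hu x.2 (by simpa [← h] using hx)))
    simp [eVec, Ne.symm this]

/-- The set of coordinates where two transversals differ. -/
def suppD (A B : Finset (JJ n)) : Finset (Fin n) :=
  Finset.univ.filter fun i => ¬(((i, false) ∈ A) ↔ ((i, false) ∈ B))

lemma mem_suppD_iff {A B : Finset (JJ n)} (hA : Transversal A) (hB : Transversal B)
    (i : Fin n) : i ∈ suppD A B ↔ eSet A i ≠ eSet B i := by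
  rw [suppD, Finset.mem_filter, eSet_apply hA, eSet_apply hB]
  by_cases h1 : (i, false) ∈ A <;> by_cases h2 : (i, false) ∈ B <;> simp [h1, h2] <;> norm_num

lemma eq_of_suppD_empty {A B : Finset (JJ n)} (hA : Transversal A) (hB : Transversal B)
    (h : suppD A B = ∅) : A = B := by
  have hiff : ∀ i : Fin n, ((i, false) ∈ A ↔ (i, false) ∈ B) := by
    intro i
    by_contra hc
    have : i ∈ suppD A B := Finset.mem_filter.2 ⟨Finset.mem_univ _, hc⟩
    simp [h] at this
  ext ⟨i, b⟩
  rw [mem_iff_bool hA i b, mem_iff_bool hB i b, hiff i]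

lemma symmDiff_eq_suppD {A B : Finset (JJ n)} (hA : Transversal A) (hB : Transversal B) :
    symmDiff A B = (suppD A B) ×ˢ (Finset.univ : Finset Bool) := by
  ext ⟨i, b⟩
  rw [Finset.mem_symmDiff, Finset.mem_product]
  simp only [Finset.mem_univ, and_true, suppD, Finset.mem_filter, true_and]
  rw [mem_iff_bool hA i b, mem_iff_bool hB i b]
  by_cases h1 : (i, false) ∈ A <;> by_cases h2 : (i, false) ∈ B <;> cases b <;>
    simp [h1, h2]

lemma suppD_card_even {A B : Finset (JJ n)} (hA : Transversal A) (hB : Transversal B)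
    (hEven : (A.filter fun x => x.2).card % 2 = (B.filter fun x => x.2).card % 2) :
    (suppD A B).card % 2 = 0 := by
  set SA := Finset.univ.filter fun i : Fin n => (i, true) ∈ A with hSA
  set SB := Finset.univ.filter fun i : Fin n => (i, true) ∈ B with hSB
  have hca : (A.filter fun x => x.2).card = SA.card := by
    apply Finset.card_bij (fun x _ => x.1)
    · rintro ⟨i, b⟩ hx
      simp only [Finset.mem_filter] at hx
      have : b = true := hx.2
      subst this
      exact Finset.mem_filter.2 ⟨Finset.mem_univ _, hx.1⟩
    · rintro ⟨i, b⟩ hx ⟨j, c⟩ hy hxy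
      simp only [Finset.mem_filter] at hx hy
      have hb : b = true := hx.2
      have hc : c = true := hy.2
      subst hb; subst hc
      simpa using hxy
    · intro i hi
      exact ⟨(i, true), Finset.mem_filter.2 ⟨(Finset.mem_filter.1 hi).2, rfl⟩, rfl⟩
  have hcb : (B.filter fun x => x.2).card = SB.card := by
    apply Finset.card_bij (fun x _ => x.1)
    · rintro ⟨i, b⟩ hx
      simp only [Finset.mem_filter] at hx
      have : b = true := hx.2
      subst this
      exact Finset.mem_filter.2 ⟨Finset.mem_univ _, hx.1⟩
    · rintro ⟨i, b⟩ hx ⟨j, c⟩ hy hxy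
      simp only [Finset.mem_filter] at hx hy
      have hb : b = true := hx.2
      have hc : c = true := hy.2
      subst hb; subst hc
      simpa using hxy
    · intro i hi
      exact ⟨(i, true), Finset.mem_filter.2 ⟨(Finset.mem_filter.1 hi).2, rfl⟩, rfl⟩
  have hsd : suppD A B = symmDiff SA SB := by
    ext i
    rw [Finset.mem_symmDiff]
    simp only [suppD, Finset.mem_filter, Finset.mem_univ, true_and, hSA, hSB]
    rw [transversal_mem_iff hA i, transversal_mem_iff hB i]
    tauto
  have h1 : (SA \ SB).card + (SA ∩ SB).card = SA.card := Finset.card_sdiff_add_card_inter _ _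
  have h2 : (SB \ SA).card + (SB ∩ SA).card = SB.card := Finset.card_sdiff_add_card_inter _ _
  have h3 : (symmDiff SA SB).card = (SA \ SB).card + (SB \ SA).card := by
    have : symmDiff SA SB = (SA \ SB) ∪ (SB \ SA) := rfl
    rw [this]
    exact Finset.card_union_of_disjoint disjoint_sdiff_sdiff
  have h4 : (SA ∩ SB).card = (SB ∩ SA).card := by rw [Finset.inter_comm]
  rw [hsd, h3]
  rw [hca, hcb] at hEven
  omega

lemma card_inter_eq_agree {A F : Finset (JJ n)} (hA : Transversal A) (hF : Transversal F) :
    (A ∩ F).card = (Finset.univ.filter fun i : Fin n =>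
      ((i, false) ∈ A ↔ (i, false) ∈ F)).card := by
  apply Finset.card_bij (fun x _ => x.1)
  · rintro ⟨i, b⟩ hx
    rw [Finset.mem_inter] at hx
    refine Finset.mem_filter.2 ⟨Finset.mem_univ _, ?_⟩
    rw [(mem_iff_bool hA i b).1 hx.1, (mem_iff_bool hF i b).1 hx.2]
  · rintro ⟨i, b⟩ hx ⟨j, c⟩ hy hxy
    simp only at hxy
    subst hxy
    rw [Finset.mem_inter] at hx hy
    have hbc1 : ((i, false) ∈ A ↔ b = false) := (mem_iff_bool hA i b).1 hx.1
    have hbc2 : ((i, false) ∈ A ↔ c = false) := (mem_iff_bool hA i c).1 hy.1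
    have : b = c := by
      cases b <;> cases c <;> simp_all
    rw [this]
  · intro i hi
    have hiff := (Finset.mem_filter.1 hi).2
    obtain ⟨b, hb, _⟩ := hA i
    refine ⟨(i, b), Finset.mem_inter.2 ⟨hb, ?_⟩, rfl⟩
    rw [mem_iff_bool hF i b, ← hiff, ← mem_iff_bool hA i b]
    exact hb
lemma exists_sorted_equiv {α : Type*} [Fintype α] {κ : α → ℝ}
    (hκ : Function.Injective κ) :
    ∃ e : Fin (Fintype.card α) ≃ α, StrictMono (κ ∘ e) := by
  letI lo : LinearOrder α := LinearOrder.lift' κ hκ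
  let e := monoEquivOfFin α rfl
  refine ⟨e.toEquiv, fun a b hab => ?_⟩
  exact e.strictMono hab

lemma star_sorted {n : ℕ} {κ : JJ n → ℝ} (hκ : Function.Injective κ)
    (hodd : ∀ x, κ (starJ x) = -κ x)
    (e : Fin (Fintype.card (JJ n)) ≃ JJ n) (he : StrictMono (κ ∘ e)) :
    ∀ a, starJ (e (Fin.rev a)) = e a := by
  have hstarbij : Function.Bijective (starJ (n := n)) :=
    Function.Involutive.bijective starJ_starJ
  set f : Fin (Fintype.card (JJ n)) → JJ n := fun a => starJ (e (Fin.rev a)) with hf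
  have hfmono : StrictMono (κ ∘ f) := by
    intro a b hab
    have h1 : Fin.rev b < Fin.rev a := Fin.rev_lt_rev.2 hab
    have h2 : κ (e (Fin.rev b)) < κ (e (Fin.rev a)) := he h1
    simp only [Function.comp, hf, hodd]
    linarith
  have hrange : Set.range (κ ∘ e) = Set.range (κ ∘ f) := by
    have hse : Function.Surjective e := e.surjective
    have hsf : Function.Surjective f := by
      intro y
      obtain ⟨a, ha⟩ := hse (starJ y)
      exact ⟨Fin.rev a, by simp [hf, Fin.rev_rev, ha, starJ_starJ]⟩
    rw [Set.range_comp, Set.range_comp, hse.range_eq, hsf.range_eq]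
  haveI : WellFoundedLT (Fin (Fintype.card (JJ n))) := inferInstance
  have : κ ∘ ⇑e = κ ∘ f := (he.range_inj hfmono).1 hrange
  intro a
  exact (hκ (congrFun this a)).symm

lemma exists_admissible_perm {n : ℕ} {lam : JJ n → ℝ} (hinj : Function.Injective lam)
    (hodd : ∀ x, lam (starJ x) = -lam x) :
    ∃ w : Equiv.Perm (JJ n), AdmissiblePerm w ∧ ∀ x y, leW w x y ↔ lam x ≤ lam y := by
  set κ0 : JJ n → ℝ := fun x => (ordJ x : ℝ) with hκ0
  have hκ0inj : Function.Injective κ0 := fun x y h =>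
    ordJ_injective (Int.cast_injective h)
  have hκ0odd : ∀ x, κ0 (starJ x) = -κ0 x := by
    intro x; simp [hκ0, ordJ_starJ]
  obtain ⟨e1, he1⟩ := exists_sorted_equiv hinj
  obtain ⟨e0, he0⟩ := exists_sorted_equiv hκ0inj
  have hs1 : ∀ a, starJ (e1 (Fin.rev a)) = e1 a := star_sorted hinj hodd e1 he1
  have hs0 : ∀ a, starJ (e0 (Fin.rev a)) = e0 a := star_sorted hκ0inj hκ0odd e0 he0
  set σ : Equiv.Perm (JJ n) := e1.symm.trans e0 with hσ
  have hσstar : ∀ x, σ (starJ x) = starJ (σ x) := by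
    intro x
    obtain ⟨a, rfl⟩ : ∃ a, e1 a = x := ⟨e1.symm x, e1.apply_symm_apply x⟩
    have h1 : starJ (e1 a) = e1 (Fin.rev a) := by
      rw [← hs1 (Fin.rev a), Fin.rev_rev]
    have h0 : starJ (e0 a) = e0 (Fin.rev a) := by
      rw [← hs0 (Fin.rev a), Fin.rev_rev]
    simp only [hσ, Equiv.trans_apply, h1, Equiv.symm_apply_apply, h0]
  refine ⟨σ.symm, ?_, ?_⟩
  · intro x
    obtain ⟨y, rfl⟩ : ∃ y, σ y = x := ⟨σ.symm x, σ.apply_symm_apply x⟩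
    rw [← hσstar y, Equiv.symm_apply_apply, Equiv.symm_apply_apply]
  · intro x y
    have hw : (σ.symm).symm = σ := Equiv.symm_symm σ
    rw [leW, hw]
    have hx : σ x = e0 (e1.symm x) := rfl
    have hy : σ y = e0 (e1.symm y) := rfl
    rw [hx, hy]
    have h0 : ∀ a b, ordJ (e0 a) ≤ ordJ (e0 b) ↔ a ≤ b := by
      intro a b
      rw [← he0.le_iff_le]
      exact Int.cast_le.symm
    rw [h0]
    have h1 : ∀ a b : Fin (Fintype.card (JJ n)), a ≤ b ↔ lam (e1 a) ≤ lam (e1 b) := by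
      intro a b; exact he1.le_iff_le.symm
    rw [h1, e1.apply_symm_apply, e1.apply_symm_apply]
/-- Bundled dot-product functional. -/
def dotL {n : ℕ} (l : Fin n → ℝ) : (Fin n → ℝ) →ₗ[ℝ] ℝ where
  toFun x := l ⬝ᵥ x
  map_add' x y := by simp [dotProduct_add]
  map_smul' c x := by simp [dotProduct_smul]

@[simp] lemma dotL_apply {n : ℕ} (l x : Fin n → ℝ) : dotL l x = l ⬝ᵥ x := rfl

lemma avoid_kernels {n : ℕ} (x : Fin n → ℝ) :
    ∀ S : Finset ((Fin n → ℝ) →ₗ[ℝ] ℝ), (∀ f ∈ S, f ≠ 0) → ∀ ε : ℝ, 0 < ε →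
    ∃ y : Fin n → ℝ, dist y x < ε ∧ ∀ f ∈ S, f y ≠ 0 := by
  intro S
  induction S using Finset.induction_on with
  | empty => intro _ ε hε; exact ⟨x, by simpa using hε, by simp⟩
  | @insert f0 S hf0S ih =>
    intro hS ε hε
    obtain ⟨y, hy, hy2⟩ :=
      ih (fun f hf => hS f (Finset.mem_insert_of_mem hf)) (ε/2) (by linarith)
    have hf0 : f0 ≠ 0 := hS f0 (Finset.mem_insert_self _ _)
    obtain ⟨z, hz⟩ : ∃ z, f0 z ≠ 0 := by
      by_contra h; push_neg at h; exact hf0 (LinearMap.ext fun z => h z)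
    set δ := (ε/2) / (‖z‖ + 1) with hδ
    have hzpos : (0:ℝ) < ‖z‖ + 1 := by positivity
    have hδpos : 0 < δ := by positivity
    have hbad : ∀ f ∈ insert f0 S, {t : ℝ | f y + t * f z = 0}.Finite := by
      intro f hf
      by_cases hfz : f z = 0
      · have hfy : f y ≠ 0 := by
          rcases Finset.mem_insert.1 hf with h | h
          · exact absurd (h ▸ hfz) hz
          · exact hy2 f h
        have : {t : ℝ | f y + t * f z = 0} = ∅ := by
          ext t; simp [hfz, hfy]
        rw [this]; exact Set.finite_empty
      · apply Set.Finite.subset (Set.finite_singleton (-(f y) / f z))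
        intro t ht
        simp only [Set.mem_setOf_eq] at ht
        simp only [Set.mem_singleton_iff]
        field_simp
        linarith
    have hbadU : (⋃ f ∈ (insert f0 S : Finset _), {t : ℝ | f y + t * f z = 0}).Finite :=
      Set.Finite.biUnion (insert f0 S).finite_toSet hbad
    obtain ⟨t, ht⟩ := ((Set.Ioo_infinite hδpos).diff hbadU).nonempty
    have htIoo : t ∈ Set.Ioo (0:ℝ) δ := ht.1
    refine ⟨y + t • z, ?_, ?_⟩
    · have h1 : dist (y + t • z) y = |t| * ‖z‖ := by
        rw [dist_eq_norm]
        simp [norm_smul, abs_of_pos htIoo.1]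
      have h2 : |t| * ‖z‖ < ε / 2 := by
        have habs : |t| = t := abs_of_pos htIoo.1
        have : t * ‖z‖ < δ * (‖z‖ + 1) := by
          have h3 : t * ‖z‖ ≤ t * (‖z‖ + 1) := by nlinarith [htIoo.1.le, norm_nonneg z]
          have h4 : t * (‖z‖ + 1) < δ * (‖z‖ + 1) := by nlinarith [htIoo.2]
          linarith
        rw [habs]
        have : δ * (‖z‖ + 1) = ε / 2 := by
          rw [hδ]; field_simp
        linarith
      calc dist (y + t • z) x ≤ dist (y + t • z) y + dist y x := dist_triangle _ _ _
        _ < ε/2 + ε/2 := by rw [h1]; exact add_lt_add h2 hy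
        _ = ε := by ring
    · intro f hf
      have heval : f (y + t • z) = f y + t * f z := by
        rw [map_add, LinearMap.map_smul]; simp
      rw [heval]
      intro h0
      exact ht.2 (Set.mem_biUnion hf h0)
lemma dot_abs_le {n : ℕ} (v w : Fin n → ℝ) (c : ℝ) (hw : ∀ i, |w i| ≤ c) :
    |v ⬝ᵥ w| ≤ (n : ℝ) * (‖v‖ * c) := by
  calc |v ⬝ᵥ w| ≤ ∑ i, |v i * w i| := Finset.abs_sum_le_sum_abs _ _
    _ ≤ ∑ _i : Fin n, ‖v‖ * c := by
        apply Finset.sum_le_sum; intro i _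
        rw [abs_mul]
        have h1 : |v i| ≤ ‖v‖ := by
          simpa [Real.norm_eq_abs] using norm_le_pi_norm v i
        exact mul_le_mul h1 (hw i) (abs_nonneg _) (norm_nonneg _)
    _ = (n : ℝ) * (‖v‖ * c) := by
        simp [Finset.sum_const, Finset.card_univ, nsmul_eq_mul]

lemma eSet_abs_le_one {n : ℕ} {C : Finset (JJ n)} (hC : Transversal C) (i : Fin n) :
    |eSet C i| ≤ 1 := by
  rw [eSet_apply hC]
  split_ifs <;> simp

set_option maxHeartbeats 1000000 in
lemma edge_suppD_card_le {n : ℕ} {ℬ : Finset (Finset (JJ n))}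
    (hM : IsLagrangianMatroid ℬ) (hT : ∀ C ∈ ℬ, Transversal C)
    {A B : Finset (JJ n)} (hE : IsEdge ℬ A B) :
    (suppD A B).card ≤ 2 := by
  by_contra hcard
  push_neg at hcard
  have hcard3 : 3 ≤ (suppD A B).card := hcard
  obtain ⟨hAB, hBB, hne, L, hLeq, hLlt⟩ := hE
  have hA : Transversal A := hT A hAB
  have hB : Transversal B := hT B hBB
  set u : Fin n → ℝ := eSet A - eSet B with hu
  have hu_apply : ∀ i, u i = eSet A i - eSet B i := fun i => rfl
  have hu_ne : ∀ i ∈ suppD A B, u i ≠ 0 := fun i hi =>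
    sub_ne_zero.2 ((mem_suppD_iff hA hB i).1 hi)
  have hu_abs : ∀ i, |u i| ≤ 2 := by
    intro i
    rw [hu_apply]
    have h1 := eSet_abs_le_one hA i
    have h2 := eSet_abs_le_one hB i
    rw [abs_le] at h1 h2 ⊢
    constructor <;> linarith
  -- duu
  have hsupp_ne : (suppD A B).Nonempty := Finset.card_pos.1 (by omega)
  obtain ⟨i0, hi0⟩ := hsupp_ne
  have hu4 : ∀ i ∈ suppD A B, (4:ℝ) ≤ u i * u i := by
    intro i hi
    have h1 : u i = eSet A i - eSet B i := rfl
    rw [eSet_apply hA, eSet_apply hB] at h1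
    have h2 := (mem_suppD_iff hA hB i).1 hi
    rw [eSet_apply hA, eSet_apply hB] at h2
    by_cases hx : (i, false) ∈ A <;> by_cases hy : (i, false) ∈ B <;>
      simp [hx, hy] at h1 h2 ⊢ <;> rw [h1] <;> norm_num
  have hduu : (4:ℝ) ≤ u ⬝ᵥ u := by
    calc (4:ℝ) ≤ u i0 * u i0 := hu4 i0 hi0
      _ ≤ ∑ i, u i * u i := by
          apply Finset.single_le_sum (f := fun i => u i * u i)
          · intro i _; exact mul_self_nonneg _
          · exact Finset.mem_univ i0
      _ = u ⬝ᵥ u := rfl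
  have hduu_pos : (0:ℝ) < u ⬝ᵥ u := by linarith
  have hduu_ne : u ⬝ᵥ u ≠ 0 := ne_of_gt hduu_pos
  -- representation of L
  set l : Fin n → ℝ := fun i => L (fun j => if i = j then 1 else 0) with hl
  have hLrepr : ∀ v : Fin n → ℝ, L v = l ⬝ᵥ v := by
    intro v
    rw [LinearMap.pi_apply_eq_sum_univ L v]
    simp only [dotProduct, hl, smul_eq_mul]
    exact Finset.sum_congr rfl fun i _ => mul_comm _ _
  have hlu : l ⬝ᵥ u = 0 := by
    rw [← hLrepr, hu, map_sub, hLeq, sub_self]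
  -- the functionals to avoid
  set P : Finset (JJ n × JJ n) := Finset.univ.filter (fun q => q.1 ≠ q.2) with hP
  set wv : JJ n × JJ n → (Fin n → ℝ) := fun q => eVec q.1 - eVec q.2 with hwv
  set cv : JJ n × JJ n → ℝ := fun q => (u ⬝ᵥ wv q) / (u ⬝ᵥ u) with hcv
  set S : Finset ((Fin n → ℝ) →ₗ[ℝ] ℝ) := P.image (fun q => dotL (wv q - cv q • u)) with hS
  have hSne : ∀ f ∈ S, f ≠ 0 := by
    intro f hf
    obtain ⟨q, hqP, rfl⟩ := Finset.mem_image.1 hf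
    have hq : q.1 ≠ q.2 := (Finset.mem_filter.1 hqP).2
    intro hzero
    have hv0 : wv q - cv q • u = 0 := by
      have h1 : (wv q - cv q • u) ⬝ᵥ (wv q - cv q • u) = 0 := by
        have := congrFun (congrArg DFunLike.coe hzero) (wv q - cv q • u)
        simpa using this
      exact (dotProduct_self_eq_zero).1 h1
    have hwequ : wv q = cv q • u := by
      have := sub_eq_zero.1 hv0; exact this
    -- pick k in suppD away from q.1.1, q.2.1
    have hk : ((suppD A B) \ {q.1.1, q.2.1}).Nonempty := by
      rw [← Finset.card_pos]
      have h1 : (suppD A B).card ≤ ((suppD A B) \ {q.1.1, q.2.1}).card + ({q.1.1, q.2.1} : Finset (Fin n)).card :=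
        Finset.card_le_card_sdiff_add_card
      have h2 : ({q.1.1, q.2.1} : Finset (Fin n)).card ≤ 2 := by
        apply le_trans (Finset.card_insert_le _ _); simp
      omega
    obtain ⟨k, hk⟩ := hk
    have hkD : k ∈ suppD A B := (Finset.mem_sdiff.1 hk).1
    have hkne : k ≠ q.1.1 ∧ k ≠ q.2.1 := by
      have := (Finset.mem_sdiff.1 hk).2
      simp at this
      exact this
    have hwk : wv q k = 0 := by
      simp only [hwv, Pi.sub_apply, eVec]
      rw [if_neg hkne.1, if_neg hkne.2, sub_zero]
    have hcq : cv q = 0 := by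
      have := congrFun hwequ k
      rw [hwk] at this
      have huk := hu_ne k hkD
      have : cv q * u k = 0 := by simpa [Pi.smul_apply, smul_eq_mul] using this.symm
      rcases mul_eq_zero.1 this with h | h
      · exact h
      · exact absurd h huk
    rw [hcq, zero_smul] at hwequ
    have : eVec q.1 = eVec q.2 := by
      have := sub_eq_zero.1 hwequ; exact this
    exact hq (eVec_injective this)
  -- the gap
  set Brest : Finset (Finset (JJ n)) := ℬ.filter (fun C => C ≠ A ∧ C ≠ B) with hBrest
  set g : ℝ := if h : Brest.Nonempty then
      Brest.inf' h (fun C => L (eSet A) - L (eSet C)) else 1 with hg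
  have hg_pos : 0 < g := by
    rw [hg]
    split_ifs with h
    · rw [Finset.lt_inf'_iff]
      intro C hC
      have hC' := Finset.mem_filter.1 hC
      have := hLlt C hC'.1 hC'.2.1 hC'.2.2
      linarith
    · norm_num
  have hg_le : ∀ C ∈ ℬ, C ≠ A → C ≠ B → L (eSet C) ≤ L (eSet A) - g := by
    intro C hC h1 h2
    have hCmem : C ∈ Brest := Finset.mem_filter.2 ⟨hC, h1, h2⟩
    have hne' : Brest.Nonempty := ⟨C, hCmem⟩
    rw [hg, dif_pos hne']
    have := Finset.inf'_le (fun C => L (eSet A) - L (eSet C)) hCmem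
    linarith
  -- choose ε and μ
  set K : ℝ := (n : ℝ) * (1 + 2 * n) with hK
  have hK_nonneg : 0 ≤ K := by positivity
  set ε : ℝ := g / (2 * K + 1) with hε
  have hε_pos : 0 < ε := by positivity
  obtain ⟨μ, hμdist, hμS⟩ := avoid_kernels l S hSne ε hε_pos
  have hμl : ‖μ - l‖ < ε := by rwa [dist_eq_norm] at hμdist
  have hμl_nonneg : 0 ≤ ‖μ - l‖ := norm_nonneg _
  -- λ
  set t : ℝ := (μ ⬝ᵥ u) / (u ⬝ᵥ u) with ht
  set lam : Fin n → ℝ := μ - t • u with hlam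
  have hlamu : lam ⬝ᵥ u = 0 := by
    rw [hlam, sub_dotProduct, smul_dotProduct, ht, smul_eq_mul,
      div_mul_cancel₀ _ hduu_ne, sub_self]
  -- bound on t
  have hμu : μ ⬝ᵥ u = (μ - l) ⬝ᵥ u := by rw [sub_dotProduct, hlu, sub_zero]
  have ht_abs : |t| ≤ (n : ℝ) * ‖μ - l‖ := by
    rw [ht, abs_div, abs_of_pos hduu_pos, hμu]
    rw [div_le_iff₀ hduu_pos]
    have h1 : |(μ - l) ⬝ᵥ u| ≤ (n : ℝ) * (‖μ - l‖ * 2) := dot_abs_le _ _ 2 hu_abs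
    nlinarith [hduu, hμl_nonneg, mul_nonneg (Nat.cast_nonneg (α := ℝ) n) hμl_nonneg]
  -- bound on lam - l coordinates
  have hlaml : ∀ i, |lam i - l i| ≤ ‖μ - l‖ + 2 * ((n:ℝ) * ‖μ - l‖) := by
    intro i
    have h1 : lam i - l i = (μ i - l i) - t * u i := by
      simp only [hlam, Pi.sub_apply, Pi.smul_apply, smul_eq_mul]; ring
    rw [h1]
    have h2 : |μ i - l i| ≤ ‖μ - l‖ := by
      simpa [Real.norm_eq_abs] using norm_le_pi_norm (μ - l) i
    have h3 : |t * u i| ≤ ((n:ℝ) * ‖μ - l‖) * 2 := by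
      rw [abs_mul]
      apply mul_le_mul ht_abs (hu_abs i) (abs_nonneg _)
      positivity
    calc |(μ i - l i) - t * u i| ≤ |μ i - l i| + |t * u i| := abs_sub _ _
      _ ≤ ‖μ - l‖ + 2 * ((n:ℝ) * ‖μ - l‖) := by linarith
  -- perturbation bound for basis points
  have hpert : ∀ C : Finset (JJ n), Transversal C →
      |lam ⬝ᵥ eSet C - l ⬝ᵥ eSet C| ≤ K * ‖μ - l‖ := by
    intro C hC
    have h1 : (lam - l) ⬝ᵥ eSet C = lam ⬝ᵥ eSet C - l ⬝ᵥ eSet C :=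
      sub_dotProduct _ _ _
    rw [← h1]
    calc |(lam - l) ⬝ᵥ eSet C| ≤ ∑ i, |(lam - l) i * eSet C i| :=
          Finset.abs_sum_le_sum_abs _ _
      _ ≤ ∑ _i : Fin n, (‖μ - l‖ + 2 * ((n:ℝ) * ‖μ - l‖)) * 1 := by
          apply Finset.sum_le_sum; intro i _
          rw [abs_mul]
          exact mul_le_mul (hlaml i) (eSet_abs_le_one hC i) (abs_nonneg _)
            (by positivity)
      _ = K * ‖μ - l‖ := by
          simp [Finset.sum_const, Finset.card_univ, nsmul_eq_mul, hK]; ring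
  -- strict inequalities for lam
  have hstrict : ∀ C ∈ ℬ, C ≠ A → C ≠ B → lam ⬝ᵥ eSet C < lam ⬝ᵥ eSet A := by
    intro C hC h1 h2
    have hC' : Transversal C := hT C hC
    have e1 := hpert C hC'
    have e2 := hpert A hA
    have e3 : L (eSet C) ≤ L (eSet A) - g := hg_le C hC h1 h2
    rw [hLrepr (eSet C), hLrepr (eSet A)] at e3
    have hKe : K * ‖μ - l‖ ≤ K * ε := by
      apply mul_le_mul_of_nonneg_left (le_of_lt hμl) hK_nonneg
    have hgK : 2 * (K * ε) < g := by
      have : (2 * K + 1) * ε = g := by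
        rw [hε]; field_simp
      nlinarith [hε_pos]
    rw [abs_le] at e1 e2
    linarith
  -- equality of lam on A and B
  have hlamAB : lam ⬝ᵥ eSet A = lam ⬝ᵥ eSet B := by
    have : lam ⬝ᵥ (eSet A - eSet B) = 0 := hlamu
    rw [dotProduct_sub] at this
    linarith
  -- injective odd weight
  set lamhat : JJ n → ℝ := fun x => lam ⬝ᵥ eVec x with hlamhat
  have hlam_inj : Function.Injective lamhat := by
    intro x y hxy
    by_contra hxyne
    have hqP : (x, y) ∈ P := Finset.mem_filter.2 ⟨Finset.mem_univ _, hxyne⟩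
    have hfS : dotL (wv (x, y) - cv (x, y) • u) ∈ S :=
      Finset.mem_image.2 ⟨(x, y), hqP, rfl⟩
    have := hμS _ hfS
    apply this
    have hval : dotL (wv (x, y) - cv (x, y) • u) μ
        = lam ⬝ᵥ wv (x, y) := by
      have e1 : dotL (wv (x, y) - cv (x, y) • u) μ
          = wv (x, y) ⬝ᵥ μ - cv (x, y) * (u ⬝ᵥ μ) := by
        rw [dotL_apply, sub_dotProduct, smul_dotProduct, smul_eq_mul]
      have e2 : lam ⬝ᵥ wv (x, y) = μ ⬝ᵥ wv (x, y) - t * (u ⬝ᵥ wv (x, y)) := by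
        rw [hlam, sub_dotProduct, smul_dotProduct, smul_eq_mul]
      rw [e1, e2, dotProduct_comm (wv (x, y)) μ, dotProduct_comm u μ]
      have e3 : cv (x, y) = (u ⬝ᵥ wv (x, y)) / (u ⬝ᵥ u) := rfl
      have e4 : t = (μ ⬝ᵥ u) / (u ⬝ᵥ u) := rfl
      rw [e3, e4, dotProduct_comm μ u]
      field_simp
    rw [hval]
    have : lam ⬝ᵥ wv (x, y) = lamhat x - lamhat y := by
      rw [hwv]; simp only [hlamhat]
      rw [dotProduct_sub]
    rw [this, hxy, sub_self]
  have hlam_odd : ∀ x, lamhat (starJ x) = -lamhat x := by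
    intro x
    simp only [hlamhat]
    rw [eVec_starJ]
    rw [dotProduct_neg]
  -- get the admissible permutation and the maximal basis
  obtain ⟨w, hwAdm, hwle⟩ := exists_admissible_perm hlam_inj hlam_odd
  obtain ⟨C, hCB, hCmax⟩ := hM.2 w hwAdm
  -- Gale sums
  have key : ∀ X Y : Finset (JJ n), setLE w X Y →
      (lam ⬝ᵥ eSet X ≤ lam ⬝ᵥ eSet Y) ∧
      (lam ⬝ᵥ eSet X = lam ⬝ᵥ eSet Y → X = Y) := by
    rintro X Y ⟨f, hbij, hle⟩
    have hYim : Y = X.image f := by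
      have h1 := hbij.image_eq
      rw [← Finset.coe_image] at h1
      exact (Finset.coe_injective h1).symm
    have hinj2 : ∀ x ∈ X, ∀ y ∈ X, f x = f y → x = y := fun x hx y hy h =>
      hbij.injOn hx hy h
    have hsum0 : lam ⬝ᵥ eSet X = ∑ a ∈ X, lamhat a := by
      rw [eSet, ← dotL_apply, map_sum]
      exact Finset.sum_congr rfl fun a _ => rfl
    have hsum1 : lam ⬝ᵥ eSet Y = ∑ a ∈ X, lamhat (f a) := by
      rw [hYim, eSet, ← dotL_apply, map_sum, Finset.sum_image hinj2]
      exact Finset.sum_congr rfl fun a _ => rfl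
    have hple : ∀ a ∈ X, lamhat a ≤ lamhat (f a) := fun a ha =>
      (hwle a (f a)).1 (hle a ha)
    constructor
    · rw [hsum0, hsum1]
      exact Finset.sum_le_sum hple
    · intro heq
      rw [hsum0, hsum1] at heq
      have hext := (Finset.sum_eq_sum_iff_of_le hple).1 heq
      have hfa : ∀ a ∈ X, f a = a := fun a ha => (hlam_inj (hext a ha)).symm
      rw [hYim]
      have : X.image f = X.image id := Finset.image_congr fun a ha => hfa a ha
      rw [this, Finset.image_id]
  -- final case analysis
  by_cases hCA : C = A
  · have hsB := key B C (hCmax B hBB)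
    have heq : lam ⬝ᵥ eSet B = lam ⬝ᵥ eSet C := by
      rw [hCA, ← hlamAB]
    exact hne ((hsB.2 heq).trans hCA).symm
  · by_cases hCB' : C = B
    · have hsA := key A C (hCmax A hAB)
      have heq : lam ⬝ᵥ eSet A = lam ⬝ᵥ eSet C := by
        rw [hCB', hlamAB]
      exact hne ((hsA.2 heq).trans hCB')
    · have hsA := key A C (hCmax A hAB)
      have := hstrict C hCB hCA hCB'
      linarith [hsA.1]
lemma isLongEdge_of_suppD_two {n : ℕ} {ℬ : Finset (Finset (JJ n))} {A B : Finset (JJ n)}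
    (hE : IsEdge ℬ A B) (hA : Transversal A) (hB : Transversal B)
    (h2 : (suppD A B).card = 2) : IsLongEdge ℬ A B := by
  obtain ⟨k1, k2, hk12, hset⟩ := Finset.card_eq_two.1 h2
  refine ⟨hE, (k1, false), (k2, false), ?_, ?_, ?_⟩
  · simp [Prod.ext_iff, hk12]
  · simp [starJ, Prod.ext_iff, hk12]
  · rw [symmDiff_eq_suppD hA hB, hset]
    ext ⟨a, b⟩
    rw [Finset.mem_product]
    simp only [starJ, Finset.mem_insert, Finset.mem_singleton, Finset.mem_univ, and_true,
      Prod.mk.injEq]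
    cases b <;> simp <;> tauto

lemma height_step {n : ℕ} {F A B : Finset (JJ n)}
    (hF : Transversal F) (hA : Transversal A) (hB : Transversal B)
    (hcA : A.card = n) (hcB : B.card = n)
    (h2 : (suppD A B).card = 2) :
    heightF F A = heightF F B ∨ heightF F A + 2 = heightF F B ∨
      heightF F B + 2 = heightF F A := by
  classical
  set agrA : Finset (Fin n) :=
    Finset.univ.filter (fun i => ((i, false) ∈ A ↔ (i, false) ∈ F)) with hagrA
  set agrB : Finset (Fin n) :=
    Finset.univ.filter (fun i => ((i, false) ∈ B ↔ (i, false) ∈ F)) with hagrB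
  have hcainter : (A ∩ F).card = agrA.card := card_inter_eq_agree hA hF
  have hcbinter : (B ∩ F).card = agrB.card := card_inter_eq_agree hB hF
  have hbase : agrA \ suppD A B = agrB \ suppD A B := by
    ext i
    simp only [Finset.mem_sdiff, hagrA, hagrB, Finset.mem_filter, Finset.mem_univ, true_and,
      suppD]
    tauto
  have hcompl : agrB ∩ suppD A B = suppD A B \ agrA := by
    ext i
    simp only [Finset.mem_inter, Finset.mem_sdiff, hagrA, hagrB, Finset.mem_filter,
      Finset.mem_univ, true_and, suppD]
    tauto
  have e1 : (agrA \ suppD A B).card + (agrA ∩ suppD A B).card = agrA.card :=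
    Finset.card_sdiff_add_card_inter _ _
  have e2 : (agrB \ suppD A B).card + (agrB ∩ suppD A B).card = agrB.card :=
    Finset.card_sdiff_add_card_inter _ _
  have e3 : (suppD A B \ agrA).card + (suppD A B ∩ agrA).card = (suppD A B).card :=
    Finset.card_sdiff_add_card_inter _ _
  have e4 : (suppD A B ∩ agrA).card = (agrA ∩ suppD A B).card := by
    rw [Finset.inter_comm]
  have e5 : (agrB ∩ suppD A B).card = (suppD A B \ agrA).card := by rw [hcompl]
  have e6 : (agrA \ suppD A B).card = (agrB \ suppD A B).card := by rw [hbase]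
  have bA : (A ∩ F).card ≤ n := by
    calc (A ∩ F).card ≤ A.card := Finset.card_le_card Finset.inter_subset_left
      _ = n := hcA
  have bB : (B ∩ F).card ≤ n := by
    calc (B ∩ F).card ≤ B.card := Finset.card_le_card Finset.inter_subset_left
      _ = n := hcB
  simp only [heightF]
  omega

lemma sign_ne_of_neg {a b : ℤ} (ha : a = 1 ∨ a = -1) (h : a = -b) : a ≠ b := by omega

end Aux

/-- For an oriented even Lagrangian matroid `(ℬ, s)` and a
fundamental basis `F`, the index of the matroid relative to `F` (the number of sign
changes along any increasing path from `F` to a basis of maximal height) equals exactly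
half of the maximal height of bases relative to `F`. -/
theorem even_index_is_half_max_height {n : ℕ}
    (ℬ : Finset (Finset (JJ n))) (hM : IsLagrangianMatroid ℬ)
    (hEven : ∀ A ∈ ℬ, ∀ B ∈ ℬ,
      (A.filter fun x => x.2).card % 2 = (B.filter fun x => x.2).card % 2)
    (s : Finset (JJ n) → Finset (JJ n) → ℤ) (hs : IsOrientation ℬ s)
    (F : Finset (JJ n)) (hF : F ∈ ℬ)
    (v : ℕ → Finset (JJ n)) (p : ℕ)
    (hv : IncreasingPath ℬ F v p) (hvmax : MaxHeightBasis ℬ F (v p)) :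
    2 * signChanges (s F) v p = ℬ.sup (heightF F) := by
  
  classical
  obtain ⟨hv0, hvE, L, hLmono, hLinc⟩ := hv
  have hTr : ∀ C ∈ ℬ, Transversal C := fun C hC =>
    transversal_of_admissible (hM.1 C hC).1 (hM.1 C hC).2
  have hcardn : ∀ C ∈ ℬ, C.card = n := fun C hC => (hM.1 C hC).2
  have hvmem : ∀ i, i ≤ p → v i ∈ ℬ := by
    intro i hi
    rcases Nat.lt_or_ge i p with h | h
    · exact (hvE i h).1
    · have : i = p := le_antisymm hi h
      rw [this]; exact hvmax.1
  have hOR := hs.2.1 F hF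
  have hpm := hOR.1
  have hhor := hOR.2.1
  have hver := hOR.2.2.1
  -- step analysis
  have hstep : ∀ i, i < p →
      (heightF F (v i) = heightF F (v (i + 1)) ∧ s F (v i) = s F (v (i + 1))) ∨
      (heightF F (v (i + 1)) = heightF F (v i) + 2 ∧ s F (v i) ≠ s F (v (i + 1))) := by
    intro i hip
    have hE := hvE i hip
    have hAmem : v i ∈ ℬ := hE.1
    have hBmem : v (i + 1) ∈ ℬ := hE.2.1
    have hAne : v i ≠ v (i + 1) := hE.2.2.1
    have hA := hTr _ hAmem
    have hB := hTr _ hBmem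
    have hle2 : (suppD (v i) (v (i + 1))).card ≤ 2 := edge_suppD_card_le hM hTr hE
    have hev : (suppD (v i) (v (i + 1))).card % 2 = 0 :=
      suppD_card_even hA hB (hEven _ hAmem _ hBmem)
    have hpos : (suppD (v i) (v (i + 1))).card ≠ 0 := by
      intro h0
      exact hAne (eq_of_suppD_empty hA hB (Finset.card_eq_zero.1 h0))
    have h2 : (suppD (v i) (v (i + 1))).card = 2 := by omega
    have hlong : IsLongEdge ℬ (v i) (v (i + 1)) := isLongEdge_of_suppD_two hE hA hB h2
    have hhdiff := height_step (hTr F hF) hA hB (hcardn _ hAmem) (hcardn _ hBmem) h2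
    have hhle : heightF F (v i) ≤ heightF F (v (i + 1)) := by
      by_contra hlt
      push_neg at hlt
      have := hLmono (v i) hAmem (v (i + 1)) hBmem hlt
      have := hLinc i hip
      linarith
    rcases hhdiff with heq | hup | hdown
    · left
      exact ⟨heq, hhor _ _ hlong heq⟩
    · right
      refine ⟨hup.symm, ?_⟩
      have hne' : heightF F (v i) ≠ heightF F (v (i + 1)) := by omega
      have hsv := hver _ _ hlong hne'
      exact sign_ne_of_neg (hpm _ hAmem) hsv
    · omega
  -- telescoping induction
  have hmain : ∀ m, m ≤ p → 2 * signChanges (s F) v m = heightF F (v m) := by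
    intro m
    induction m with
    | zero =>
      intro _
      have hFn : F.card = n := hcardn F hF
      simp [signChanges, hv0, heightF, Finset.inter_self, hFn]
    | succ m ih =>
      intro hm
      have hmp : m < p := Nat.lt_of_succ_le hm
      have hrec := ih (le_of_lt hmp)
      have hnm : m ∉ (Finset.range m).filter
          (fun i => s F (v i) ≠ s F (v (i + 1))) := by
        intro h
        exact absurd (Finset.mem_range.1 (Finset.mem_filter.1 h).1) (lt_irrefl m)
      rcases hstep m hmp with ⟨h1, h2⟩ | ⟨h1, h2⟩
      · have hsc : signChanges (s F) v (m + 1) = signChanges (s F) v m := by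
          rw [signChanges, signChanges, Finset.range_add_one, Finset.filter_insert,
            if_neg (by simpa using h2)]
        rw [hsc, hrec, h1]
      · have hsc : signChanges (s F) v (m + 1) = signChanges (s F) v m + 1 := by
          rw [signChanges, signChanges, Finset.range_add_one, Finset.filter_insert,
            if_pos h2, Finset.card_insert_of_notMem hnm]
        rw [hsc, h1]
        omega
  have h1 := hmain p le_rfl
  have h2 : ℬ.sup (heightF F) = heightF F (v p) :=
    le_antisymm (Finset.sup_le hvmax.2) (Finset.le_sup hvmax.1)
  rw [h1, h2]
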